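/- arXiv:2605.16145 — 3 statements merged into one kernel-verified Lean document; each statement's English description precedes it below -/
import Mathlib

section
/- Let R_1, …, R_{n+1} be real-valued random variables on a probability space whose joint distribution is exchangeable, i.e., invariant under every permutation of the indices {1, …, n+1}. For k ∈ {1, …, n+1} let R̃_{(k)} denote the k-th order statistic of the full set {R_1, …, R_{n+1}}. Then for every k ∈ {1, …, n+1}, Pr(R_{n+1} ≤ R̃_{(k)}) ≥ k/(n+1). -/
/-!
Let `S i` be the event that `R i` is at most the `k`-th order statistic. Each outcome lies in at
least `k` of these events (those of the indices carrying the `k` smallest values), so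
`∑ i, P (S i) ≥ k`. Permuting the coordinates does not change the order statistic, so
exchangeability makes all the `P (S i)` equal, whence `(n + 1) * P (S (n + 1)) ≥ k`.
-/

open MeasureTheory

/-- The `k`-th order statistic (1-based, counted with multiplicity) of the values
`v 0, …, v (m-1)`: the `k`-th smallest element of the list sorted in nondecreasing
order, with junk value `0` when `k` is out of range. -/
noncomputable def orderStat {m : ℕ} (v : Fin m → ℝ) (k : ℕ) : ℝ :=
  (List.insertionSort (· ≤ ·) (List.ofFn v)).getD (k - 1) 0

open Finset

theorem List.Pairwise.apply_getElem_iff_lt_countP {α : Type*} [Preorder α] {p : α → Prop}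
    [DecidablePred p] {L : List α} (hL : L.Pairwise (· ≤ ·)) (hp : Antitone p) {m : ℕ}
    (hm : m < L.length) : p L[m] ↔ m < L.countP (p ·) := by
  induction L generalizing m with
  | nil => simp at hm
  | cons a t ih =>
    rw [List.pairwise_cons] at hL
    by_cases ha : p a
    · cases m with
      | zero => simp [ha]
      | succ m => simp [ih hL.2 (Nat.lt_of_succ_lt_succ hm), ha]
    · have hmin : ∀ b ∈ a :: t, a ≤ b := by simpa using hL.1
      have hzero : (a :: t).countP (p ·) = 0 :=
        List.countP_eq_zero.2 fun b hb => by simpa using fun hpb => ha (hp (hmin b hb) hpb)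
      simp only [hzero, Nat.not_lt_zero, iff_false]
      exact fun h => ha (hp (hmin _ (List.getElem_mem _)) h)

theorem card_filter_univ_eq_countP_ofFn {α : Type*} {m : ℕ} (v : Fin m → α) (p : α → Prop)
    [DecidablePred p] : #{i | p (v i)} = (List.ofFn v).countP (p ·) := by
  rw [← Multiset.coe_countP, ← Fin.univ_val_map, Multiset.countP_map]
  rfl

section orderStat

variable {m : ℕ} {k : ℕ}

theorem Antitone.apply_orderStat_iff {p : ℝ → Prop} [DecidablePred p] (hp : Antitone p)
    (v : Fin m → ℝ) (hk1 : 1 ≤ k) (hk2 : k ≤ m) :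
    p (orderStat v k) ↔ k ≤ #{i | p (v i)} := by
  have hlen : k - 1 < (List.insertionSort (· ≤ ·) (List.ofFn v)).length := by
    rw [List.length_insertionSort, List.length_ofFn]
    omega
  rw [orderStat, List.getD_eq_getElem _ _ hlen,
    (List.pairwise_insertionSort _ _).apply_getElem_iff_lt_countP hp hlen,
    (List.perm_insertionSort _ _).countP_eq, ← card_filter_univ_eq_countP_ofFn]
  omega

theorem le_orderStat_iff_card_lt (v : Fin m → ℝ) (hk1 : 1 ≤ k) (hk2 : k ≤ m) (x : ℝ) :
    x ≤ orderStat v k ↔ #{i | v i < x} < k := by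
  rw [← not_lt, not_iff_comm, not_lt,
    Antitone.apply_orderStat_iff (p := (· < x)) (fun _ _ hab h => hab.trans_lt h) v hk1 hk2]

theorem le_card_filter_le_orderStat (v : Fin m → ℝ) (hk1 : 1 ≤ k) (hk2 : k ≤ m) :
    k ≤ #{i | v i ≤ orderStat v k} :=
  (Antitone.apply_orderStat_iff (p := (· ≤ orderStat v k)) (fun _ _ hab h => hab.trans h) v hk1
    hk2).1 le_rfl

theorem orderStat_comp_perm (v : Fin m → ℝ) (π : Equiv.Perm (Fin m)) :
    orderStat (v ∘ π) k = orderStat v k := by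
  rw [orderStat, orderStat,
    ((List.perm_insertionSort _ _).trans ((π.ofFn_comp_perm v).trans
      (List.perm_insertionSort _ _).symm)).eq_of_pairwise'
    (List.pairwise_insertionSort _ _) (List.pairwise_insertionSort _ _)]

theorem measurable_orderStat (hk1 : 1 ≤ k) (hk2 : k ≤ m) :
    Measurable fun v : Fin m → ℝ => orderStat v k := by
  refine measurable_of_Ici fun x => ?_
  have hcard : Measurable fun v : Fin m → ℝ => #{i | v i < x} := by
    simp_rw [Finset.card_filter]
    exact Finset.measurable_sum _ fun i _ =>
      Measurable.ite (measurableSet_lt (measurable_pi_apply i) measurable_const)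
        measurable_const measurable_const
  simp_rw [Set.preimage, Set.mem_Ici, le_orderStat_iff_card_lt _ hk1 hk2]
  exact hcard measurableSet_Iio

end orderStat

theorem natCast_mul_measure_univ_le_sum_measure {X ι : Type*} [MeasurableSpace X] [Fintype ι]
    (μ : Measure X) (S : ι → Set X) [∀ x, DecidablePred fun i => x ∈ S i] {k : ℕ}
    (hS : ∀ x, k ≤ #{i | x ∈ S i}) : k * μ Set.univ ≤ ∑ i, μ (S i) := by
  classical
  -- The `S i` need not be measurable: replace them by measurable hulls of the same measure.
  set T := fun i => toMeasurable μ (S i)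
  have hT : ∀ x, (k : ENNReal) ≤ ∑ i, (T i).indicator 1 x := by
    intro x
    calc (k : ENNReal) ≤ #{i | x ∈ S i} := by exact_mod_cast hS x
      _ ≤ #{i | x ∈ T i} := by
        gcongr with i
        exact subset_toMeasurable μ (S i)
      _ = ∑ i, (T i).indicator 1 x := by
        simp only [Set.indicator_apply, Pi.one_apply, Finset.sum_boole]
  calc (k : ENNReal) * μ Set.univ = ∫⁻ _, (k : ENNReal) ∂μ := by rw [lintegral_const]
    _ ≤ ∫⁻ x, ∑ i, (T i).indicator 1 x ∂μ := lintegral_mono hT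
    _ = ∑ i, μ (T i) := by
      rw [lintegral_finsetSum _ fun i _ =>
        measurable_one.indicator (measurableSet_toMeasurable _ _)]
      exact Finset.sum_congr rfl fun i _ =>
        lintegral_indicator_one (measurableSet_toMeasurable _ _)
    _ = ∑ i, μ (S i) := by simp_rw [T, measure_toMeasurable]

def Exchangeable {Ω ι α : Type*} [MeasurableSpace Ω] [MeasurableSpace α] (P : Measure Ω)
    (R : ι → Ω → α) : Prop :=
  ∀ π : Equiv.Perm ι,
    Measure.map (fun ω i => R (π i) ω) P = Measure.map (fun ω i => R i ω) P

theorem Exchangeable.measure_le_orderStat_eq {Ω : Type*} [MeasurableSpace Ω] {P : Measure Ω}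
    {m : ℕ} {R : Fin m → Ω → ℝ} (hR : Exchangeable P R) (hmeas : ∀ i, Measurable (R i))
    {k : ℕ} (hk1 : 1 ≤ k) (hk2 : k ≤ m) (i j : Fin m) :
    P {ω | R i ω ≤ orderStat (fun l => R l ω) k} =
      P {ω | R j ω ≤ orderStat (fun l => R l ω) k} := by
  have hS : MeasurableSet {v : Fin m → ℝ | v j ≤ orderStat v k} :=
    measurableSet_le (measurable_pi_apply j) (measurable_orderStat hk1 hk2)
  have hident : ProbabilityTheory.IdentDistrib (fun ω l => R (Equiv.swap i j l) ω)
      (fun ω l => R l ω) P P :=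
    ⟨(measurable_pi_lambda _ fun l => hmeas _).aemeasurable,
      (measurable_pi_lambda _ hmeas).aemeasurable, hR _⟩
  calc P {ω | R i ω ≤ orderStat (fun l => R l ω) k}
      = P ((fun ω l => R (Equiv.swap i j l) ω) ⁻¹' {v | v j ≤ orderStat v k}) := by
        congr 1
        ext ω
        simp only [Set.mem_ofPred_eq, Set.mem_preimage, Equiv.swap_apply_right]
        exact iff_of_eq (congrArg _ (orderStat_comp_perm (fun l => R l ω) _).symm)
    _ = P ((fun ω l => R l ω) ⁻¹' {v | v j ≤ orderStat v k}) := hident.measure_mem_eq hS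
    _ = P {ω | R j ω ≤ orderStat (fun l => R l ω) k} := rfl

/-- If `R 1, …, R (n+1)` are real random variables whose joint distribution is
exchangeable (invariant under every permutation of the indices), then for every
`k ∈ {1, …, n+1}` we have `Pr(R (n+1) ≤ R̃_(k)) ≥ k / (n+1)`, where `R̃_(k)` is the
`k`-th order statistic of the full set `{R 1, …, R (n+1)}`. -/
theorem prob_last_le_orderStat_full {Ω : Type*} [MeasurableSpace Ω]
    (P : Measure Ω) [IsProbabilityMeasure P]
    (n : ℕ) (R : Fin (n + 1) → Ω → ℝ) (hmeas : ∀ i, Measurable (R i))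
    (hexch : ∀ π : Equiv.Perm (Fin (n + 1)),
      Measure.map (fun ω => fun i => R (π i) ω) P =
        Measure.map (fun ω => fun i => R i ω) P)
    (k : ℕ) (hk1 : 1 ≤ k) (hk2 : k ≤ n + 1) :
    (k : ENNReal) / ((n : ENNReal) + 1) ≤
      P {ω | R (Fin.last n) ω ≤ orderStat (fun i => R i ω) k} := by
  set S : Fin (n + 1) → Set Ω := fun i => {ω | R i ω ≤ orderStat (fun j => R j ω) k}
  have hsum : (k : ENNReal) * P Set.univ ≤ ∑ i, P (S i) :=
    natCast_mul_measure_univ_le_sum_measure P S fun ω =>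
      le_card_filter_le_orderStat _ hk1 hk2
  have hsame (i) : P (S i) = P (S (Fin.last n)) :=
    Exchangeable.measure_le_orderStat_eq hexch hmeas hk1 hk2 i _
  simp only [hsame, measure_univ, mul_one, Finset.sum_const, Finset.card_univ, Fintype.card_fin,
    nsmul_eq_mul, Nat.cast_add, Nat.cast_one] at hsum
  rw [ENNReal.div_le_iff_le_mul (Or.inl (by simp)) (Or.inl (by simp)), mul_comm]
  exact hsum
end

section
/- Let R_1, …, R_{n+1} be real-valued random variables on a probability space whose joint distribution is exchangeable, i.e., invariant under every permutation of the indices {1, …, n+1}. Let 0 < α < 1 satisfy ⌈(1−α)(n+1)⌉ ≤ n, and let r̂ = R_{(⌈(1−α)(n+1)⌉)} be the ⌈(1−α)(n+1)⌉-th order statistic of the first n variables R_1, …, R_n. Then Pr(R_{n+1} ≤ r̂) ≥ 1 − α. -/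
open MeasureTheory

/-!
Call `#{i | R i < R j}` the rank of index `j`. Among any `n + 1` reals at least `k` indices have
rank `< k` (the first `k` positions of a sorted arrangement do, ties included), so the events
`{rank j < k}` have probabilities summing to at least `k`. Exchangeability makes these
probabilities equal, hence each is `≥ k / (n + 1) ≥ 1 - α` for `k = ⌈(1 - α)(n + 1)⌉`. For the
last index, `rank < k` says exactly that fewer than `k` of the first `n` values lie strictly
below `R (n + 1)`, i.e. that `R (n + 1)` is at most their `k`-th order statistic.
-/

open Finset

section Rank

variable {ι α : Type*} [Fintype ι] [LinearOrder α]

def rank (v : ι → α) (j : ι) : ℕ := #{i | v i < v j}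

lemma rank_comp_perm (v : ι → α) (σ : Equiv.Perm ι) (j : ι) :
    rank (v ∘ σ) j = rank v (σ j) :=
  card_equiv σ (by simp)

lemma Monotone.le_apply_iff_card_filter_lt_le {m : ℕ} {w : Fin m → α} (hw : Monotone w)
    (j : Fin m) (x : α) : x ≤ w j ↔ #{i | w i < x} ≤ j := by
  constructor
  · intro hx
    calc #{i | w i < x} ≤ #(Iio j) :=
          card_le_card fun i hi ↦ mem_Iio.2 <| lt_of_not_ge fun hji ↦
            ((mem_filter.1 hi).2.trans_le (hx.trans (hw hji))).false
      _ = j := Fin.card_Iio j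
  · intro hcard
    by_contra! hx
    have : #(Iic j) ≤ #{i | w i < x} :=
      card_le_card fun i hi ↦ mem_filter.2 ⟨mem_univ i, (hw (mem_Iic.1 hi)).trans_lt hx⟩
    rw [Fin.card_Iic] at this
    omega

lemma Monotone.rank_le {m : ℕ} {w : Fin m → α} (hw : Monotone w) (j : Fin m) :
    rank w j ≤ j :=
  (hw.le_apply_iff_card_filter_lt_le j (w j)).1 le_rfl

lemma le_card_rank_lt {m : ℕ} (v : Fin m → α) {k : ℕ} (hk : k ≤ m) :
    k ≤ #{j | rank v j < k} := by
  have hsorted := Tuple.monotone_sort v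
  calc k = #{j : Fin m | (j : ℕ) < k} := by rw [Fin.card_filter_val_lt]; omega
    _ ≤ #{j | rank (v ∘ Tuple.sort v) j < k} :=
        card_le_card fun j hj ↦ by
          simp only [mem_filter, mem_univ, true_and] at hj ⊢
          exact (hsorted.rank_le j).trans_lt hj
    _ = #{j | rank v j < k} := card_equiv (Tuple.sort v) (by simp [rank_comp_perm])

end Rank

lemma orderStat_eq_sort {m : ℕ} (v : Fin m → ℝ) {k : ℕ} (hk₁ : 1 ≤ k) (hk₂ : k ≤ m) :
    orderStat v k = (v ∘ Tuple.sort v) ⟨k - 1, by omega⟩ := by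
  have hsort : List.insertionSort (· ≤ ·) (List.ofFn v) = List.ofFn (v ∘ Tuple.sort v) :=
    List.Perm.eq_of_pairwise' (List.pairwise_insertionSort _ _)
      (Tuple.monotone_sort v).sortedLE_ofFn.pairwise
      ((List.perm_insertionSort _ _).trans (Equiv.Perm.ofFn_comp_perm (Tuple.sort v) v).symm)
  rw [orderStat, hsort, List.getD_eq_getElem?_getD]
  simp [show k - 1 < m by omega]

lemma le_orderStat_iff {m : ℕ} (v : Fin m → ℝ) {k : ℕ} (hk₁ : 1 ≤ k) (hk₂ : k ≤ m) (x : ℝ) :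
    x ≤ orderStat v k ↔ #{i | v i < x} < k := by
  rw [orderStat_eq_sort v hk₁ hk₂,
    (Tuple.monotone_sort v).le_apply_iff_card_filter_lt_le,
    show #{i | (v ∘ Tuple.sort v) i < x} = #{i | v i < x} from card_equiv (Tuple.sort v) (by simp)]
  dsimp only
  omega

lemma le_orderStat_init_iff_rank_last_lt {n : ℕ} (v : Fin (n + 1) → ℝ) {k : ℕ} (hk₁ : 1 ≤ k)
    (hk₂ : k ≤ n) :
    v (Fin.last n) ≤ orderStat (fun i : Fin n ↦ v i.castSucc) k ↔ rank v (Fin.last n) < k := by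
  rw [le_orderStat_iff _ hk₁ hk₂, rank, card_filter, card_filter, Fin.sum_univ_castSucc]
  simp

lemma measurableSet_rank_lt {ι : Type*} [Fintype ι] (j : ι) (k : ℕ) :
    MeasurableSet {f : ι → ℝ | rank f j < k} := by
  have : Measurable fun f : ι → ℝ ↦ rank f j := by
    simp only [rank, card_filter]
    exact Finset.measurable_sum _ fun i _ ↦ Measurable.ite
      (measurableSet_lt (measurable_pi_apply i) (measurable_pi_apply j)) measurable_const
      measurable_const
  exact this (MeasurableSet.of_discrete (s := Set.Iio k))

open Classical in
lemma natCast_mul_measure_univ_le_sum {Ω ι : Type*} [MeasurableSpace Ω] [Fintype ι]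
    (μ : Measure Ω) {E : ι → Set Ω} (hE : ∀ j, MeasurableSet (E j)) {k : ℕ}
    (hk : ∀ ω, k ≤ #{j | ω ∈ E j}) :
    k * μ Set.univ ≤ ∑ j, μ (E j) := by
  calc k * μ Set.univ = ∫⁻ _, (k : ENNReal) ∂μ := (lintegral_const _).symm
    _ ≤ ∫⁻ ω, ∑ j, (E j).indicator 1 ω ∂μ := lintegral_mono fun ω ↦ by
        calc (k : ENNReal) ≤ #{j | ω ∈ E j} := by exact_mod_cast hk ω
          _ = ∑ j, (E j).indicator 1 ω := by
            simp only [card_filter, Nat.cast_sum, Nat.cast_ite, Nat.cast_one, Nat.cast_zero,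
              Set.indicator_apply, Pi.one_apply]
    _ = ∑ j, μ (E j) := by
        rw [lintegral_finsetSum _ fun j _ ↦ measurable_one.indicator (hE j)]
        simp_rw [lintegral_indicator_one (hE _)]

lemma measure_rank_lt_eq_of_exchangeable {Ω ι : Type*} [MeasurableSpace Ω] [Fintype ι]
    (P : Measure Ω) (X : ι → Ω → ℝ) (hX : ∀ i, Measurable (X i))
    (hexch : ∀ π : Equiv.Perm ι,
      Measure.map (fun ω ↦ fun i ↦ X (π i) ω) P = Measure.map (fun ω ↦ fun i ↦ X i ω) P)
    (σ : Equiv.Perm ι) (j : ι) (k : ℕ) :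
    P {ω | rank (X · ω) (σ j) < k} = P {ω | rank (X · ω) j < k} := by
  have h := congrArg (· {f | rank f j < k}) (hexch σ)
  simp only [Measure.map_apply (measurable_pi_lambda _ fun i ↦ hX (σ i))
    (measurableSet_rank_lt j k), Measure.map_apply (measurable_pi_lambda _ hX)
    (measurableSet_rank_lt j k)] at h
  have hrank : ∀ ω, rank (fun i ↦ X (σ i) ω) j = rank (X · ω) (σ j) :=
    fun ω ↦ rank_comp_perm (X · ω) σ j
  simpa only [Set.preimage_ofPred_eq, hrank] using h

lemma natCast_le_mul_measure_rank_lt {Ω : Type*} [MeasurableSpace Ω] (P : Measure Ω)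
    [IsProbabilityMeasure P] {m : ℕ} (X : Fin m → Ω → ℝ) (hX : ∀ i, Measurable (X i))
    (hexch : ∀ π : Equiv.Perm (Fin m),
      Measure.map (fun ω ↦ fun i ↦ X (π i) ω) P = Measure.map (fun ω ↦ fun i ↦ X i ω) P)
    (j : Fin m) {k : ℕ} (hk : k ≤ m) :
    (k : ENNReal) ≤ m * P {ω | rank (X · ω) j < k} := by
  have hsum := natCast_mul_measure_univ_le_sum P (E := fun i ↦ {ω | rank (X · ω) i < k})
    (fun i ↦ measurable_pi_lambda _ hX (measurableSet_rank_lt i k))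
    (fun ω ↦ by convert le_card_rank_lt (X · ω) hk using 3; rfl)
  calc (k : ENNReal) ≤ ∑ i, P {ω | rank (X · ω) i < k} := by simpa using hsum
    _ = ∑ _i : Fin m, P {ω | rank (X · ω) j < k} := sum_congr rfl fun i _ ↦ by
        simpa using measure_rank_lt_eq_of_exchangeable P X hX hexch (Equiv.swap j i) j k
    _ = m * P {ω | rank (X · ω) j < k} := by simp

theorem prob_last_le_calibrated_threshold_general {Ω : Type*} [MeasurableSpace Ω]
    (P : Measure Ω) [IsProbabilityMeasure P]
    (n : ℕ) (R : Fin (n + 1) → Ω → ℝ) (hmeas : ∀ i, Measurable (R i))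
    (hexch : ∀ π : Equiv.Perm (Fin (n + 1)),
      Measure.map (fun ω => fun i => R (π i) ω) P =
        Measure.map (fun ω => fun i => R i ω) P)
    (α : ℝ) (hα1 : α < 1)
    (hceil : ⌈(1 - α) * ((n : ℝ) + 1)⌉₊ ≤ n) :
    ENNReal.ofReal (1 - α) ≤
      P {ω | R (Fin.last n) ω ≤
        orderStat (fun i : Fin n => R i.castSucc ω) ⌈(1 - α) * ((n : ℝ) + 1)⌉₊} := by
  set k := ⌈(1 - α) * ((n : ℝ) + 1)⌉₊
  have hk : 1 ≤ k := Nat.ceil_pos.2 <| mul_pos (sub_pos.2 hα1) n.cast_add_one_pos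
  have hevent : {ω | R (Fin.last n) ω ≤ orderStat (fun i : Fin n ↦ R i.castSucc ω) k} =
      {ω | rank (R · ω) (Fin.last n) < k} :=
    Set.ext fun ω ↦ le_orderStat_init_iff_rank_last_lt (R · ω) hk hceil
  rw [hevent]
  have hcount := natCast_le_mul_measure_rank_lt P R hmeas hexch (Fin.last n) (k := k) (by omega)
  rw [← ENNReal.mul_le_mul_iff_right (a := ((n + 1 : ℕ) : ENNReal)) (by simp) (by simp)]
  calc ((n + 1 : ℕ) : ENNReal) * ENNReal.ofReal (1 - α)
      = ENNReal.ofReal ((1 - α) * ((n : ℝ) + 1)) := by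
        rw [mul_comm, ENNReal.ofReal_mul (sub_pos.2 hα1).le]
        norm_cast
    _ ≤ k := by simpa using ENNReal.ofReal_le_ofReal (Nat.le_ceil _)
    _ ≤ _ := hcount

/-- If `R 1, …, R (n+1)` are real random variables whose joint distribution is
exchangeable, `0 < α < 1` satisfies `⌈(1−α)(n+1)⌉ ≤ n`, and `r̂` is the
`⌈(1−α)(n+1)⌉`-th order statistic of the first `n` variables, then
`Pr(R (n+1) ≤ r̂) ≥ 1 − α`. -/
theorem prob_last_le_calibrated_threshold {Ω : Type*} [MeasurableSpace Ω]
    (P : Measure Ω) [IsProbabilityMeasure P]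
    (n : ℕ) (R : Fin (n + 1) → Ω → ℝ) (hmeas : ∀ i, Measurable (R i))
    (hexch : ∀ π : Equiv.Perm (Fin (n + 1)),
      Measure.map (fun ω => fun i => R (π i) ω) P =
        Measure.map (fun ω => fun i => R i ω) P)
    (α : ℝ) (hα0 : 0 < α) (hα1 : α < 1)
    (hceil : ⌈(1 - α) * ((n : ℝ) + 1)⌉₊ ≤ n) :
    ENNReal.ofReal (1 - α) ≤
      P {ω | R (Fin.last n) ω ≤
        orderStat (fun i : Fin n => R i.castSucc ω) ⌈(1 - α) * ((n : ℝ) + 1)⌉₊} :=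
  prob_last_le_calibrated_threshold_general P n R hmeas hexch α hα1 hceil
end

section
/- Let (X_1, Y_1), …, (X_{n+1}, Y_{n+1}) be random pairs with X_i taking values in ℝ^d and Y_i in ℝ, whose joint distribution is exchangeable, i.e., invariant under every permutation of the indices {1, …, n+1}. For each x ∈ ℝ^d let {C_r(x)}_{r ≥ 0} be a family of subsets of ℝ that is nondecreasing and right-continuous in r (C_r(x) = ⋂_{t > r} C_t(x)), and let s(x, y) = inf { r ≥ 0 : y ∈ C_r(x) } be its gauge, assumed to be a measurable function of (x, y). Define R_i = s(X_i, Y_i), let 0 < α < 1 satisfy ⌈(1−α)(n+1)⌉ ≤ n, and let r̂ = R_{(⌈(1−α)(n+1)⌉)} be the ⌈(1−α)(n+1)⌉-th order statistic of R_1, …, R_n. Then Pr(Y_{n+1} ∈ C_{r̂}(X_{n+1})) ≥ 1 − α. -/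
open MeasureTheory
open scoped ENNReal NNReal

/-- The gauge of a family `{C r}_{r ≥ 0}` of subsets of `ℝ` indexed by the nonnegative
reals: `gaugeFn C y = inf {r ≥ 0 : y ∈ C r}`, valued in `ℝ≥0∞` with the convention that
the infimum of the empty set is `+∞`. -/
noncomputable def gaugeFn (C : ℝ≥0 → Set ℝ) (y : ℝ) : ℝ≥0∞ :=
  ⨅ (t : ℝ≥0) (_ : y ∈ C t), (t : ℝ≥0∞)

/-- The `k`-th order statistic (1-based, counted with multiplicity) of the extended
nonnegative real values `v 0, …, v (m-1)`, with junk value `0` when `k` is out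
of range. -/
noncomputable def orderStatE {m : ℕ} (v : Fin m → ℝ≥0∞) (k : ℕ) : ℝ≥0∞ :=
  (List.insertionSort (· ≤ ·) (List.ofFn v)).getD (k - 1) 0

section aux

lemma mem_of_gauge_le {C : ℝ≥0 → Set ℝ} (hmono : ∀ r t : ℝ≥0, r ≤ t → C r ⊆ C t)
    (hrc : ∀ r : ℝ≥0, C r = ⋂ (t : ℝ≥0) (_ : r < t), C t)
    {y : ℝ} {t : ℝ≥0} (h : gaugeFn C y ≤ t) : y ∈ C t := by
  rw [hrc t]
  refine Set.mem_iInter₂.2 fun t' ht' => ?_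
  have hlt : gaugeFn C y < (t' : ℝ≥0∞) := lt_of_le_of_lt h (by exact_mod_cast ht')
  rw [gaugeFn] at hlt
  obtain ⟨r, hrlt⟩ := iInf_lt_iff.mp hlt
  by_cases hy : y ∈ C r
  · have hr : (r : ℝ≥0∞) < t' := by simpa [hy] using hrlt
    exact hmono r t' (le_of_lt (by exact_mod_cast hr)) hy
  · simp [hy] at hrlt

lemma rank_count_lemma {m : ℕ} (v : Fin m → ℝ≥0∞) (k : ℕ) (hk : k ≤ m) :
    k ≤ (Finset.univ.filter fun i =>
      (Finset.univ.filter fun j => v j < v i).card < k).card := by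
  set T := Finset.univ.filter fun i : Fin m =>
      (Finset.univ.filter fun j => v j < v i).card < k with hT
  set S := Finset.univ.filter fun i : Fin m =>
      k ≤ (Finset.univ.filter fun j => v j < v i).card with hS
  by_cases hSne : S.Nonempty
  · obtain ⟨i₀, hi₀S, hi₀min⟩ := S.exists_min_image v hSne
    have hsub : (Finset.univ.filter fun j => v j < v i₀) ⊆ T := by
      intro j hj
      simp only [Finset.mem_filter, Finset.mem_univ, true_and] at hj ⊢
      by_contra hjk
      simp only [hT, Finset.mem_filter, Finset.mem_univ, true_and, not_lt] at hjk
      have : j ∈ S := by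
        simp only [hS, Finset.mem_filter, Finset.mem_univ, true_and]; exact hjk
      exact absurd hj (not_lt.2 (hi₀min j this))
    have hk' : k ≤ (Finset.univ.filter fun j => v j < v i₀).card := by
      simpa [hS] using hi₀S
    exact hk'.trans (Finset.card_le_card hsub)
  · have : T = Finset.univ := by
      ext i
      simp only [hT, Finset.mem_filter, Finset.mem_univ, true_and, iff_true]
      by_contra hik
      push_neg at hik
      exact hSne ⟨i, by
        simp only [hS, Finset.mem_filter, Finset.mem_univ, true_and]; exact hik⟩
    rw [this, Finset.card_univ, Fintype.card_fin]
    exact hk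

lemma countP_ofFn_eq {m : ℕ} (w : Fin m → ℝ≥0∞) (a : ℝ≥0∞) :
    List.countP (fun x => decide (x < a)) (List.ofFn w)
      = (Finset.univ.filter fun j => w j < a).card := by
  rw [List.ofFn_eq_map, List.countP_map]
  rw [Finset.card_filter, Fin.univ_def]
  simp only [Finset.sum, List.countP_eq_length_filter, Multiset.filter_coe]
  induction (List.finRange m) with
  | nil => simp
  | cons x l ih =>
    by_cases h : w x < a <;> [skip; skip] <;>
      simp [List.filter_cons, h, Function.comp, ih] <;> omega

lemma le_orderStatE {m : ℕ} (w : Fin m → ℝ≥0∞) {k : ℕ} (hk1 : 1 ≤ k) (hkm : k ≤ m)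
    {a : ℝ≥0∞} (h : (Finset.univ.filter fun j => w j < a).card < k) :
    a ≤ orderStatE w k := by
  by_contra hcon
  push_neg at hcon
  set l := List.insertionSort (· ≤ ·) (List.ofFn w) with hl
  have hlen : l.length = m := by
    rw [hl, List.length_insertionSort, List.length_ofFn]
  have hsorted : List.Pairwise (· ≤ ·) l := List.pairwise_insertionSort _ _
  have hidx : k - 1 < l.length := by omega
  have hget : l.getD (k - 1) 0 = l.get ⟨k - 1, hidx⟩ := by
    rw [List.getD_eq_getElem _ _ hidx]; simp
  rw [orderStatE, ← hl, hget] at hcon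
  have htake : ∀ x ∈ l.take k, x < a := by
    intro x hx
    rw [List.mem_take_iff_getElem] at hx
    obtain ⟨i, hi, rfl⟩ := hx
    have hik : i < k := lt_of_lt_of_le hi (min_le_left _ _)
    have hile : (⟨i, by omega⟩ : Fin l.length) ≤ ⟨k - 1, hidx⟩ := by
      simp only [Fin.mk_le_mk]; omega
    have := hsorted.rel_get_of_le hile
    simp only [List.get_eq_getElem] at this ⊢
    exact lt_of_le_of_lt this hcon
  have hcount : k ≤ l.countP (fun x => decide (x < a)) := by
    have h1 : (l.take k).countP (fun x => decide (x < a)) = k := by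
      have := List.countP_eq_length (p := fun x => decide (x < a)) (l := l.take k)
      rw [this.2 (fun x hx => by simpa using htake x hx)]
      rw [List.length_take]; omega
    calc k = (l.take k).countP (fun x => decide (x < a)) := h1.symm
    _ ≤ l.countP (fun x => decide (x < a)) := by
        conv_rhs => rw [← List.take_append_drop k l]
        rw [List.countP_append]; omega
  have hperm : l.countP (fun x => decide (x < a)) =
      (List.ofFn w).countP (fun x => decide (x < a)) :=
    (List.perm_insertionSort _ _).countP_eq _
  rw [hperm, countP_ofFn_eq] at hcount
  omega

end aux

/-- Split conformal prediction, dual form (Proposition 3).  Let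
`(X 1, Y 1), …, (X (n+1), Y (n+1))` be exchangeable random pairs with values in
`ℝ^d × ℝ`.  For each `x ∈ ℝ^d`, let `{C x r}_{r ≥ 0}` be a nondecreasing and
right-continuous family of subsets of `ℝ` with measurable gauge `s`, and set
`R i = s (X i) (Y i)`.  For `0 < α < 1` with `⌈(1−α)(n+1)⌉ ≤ n`, let `r̂` be the
`⌈(1−α)(n+1)⌉`-th order statistic of `R 1, …, R n`.  Then
`Pr(Y (n+1) ∈ C (X (n+1)) r̂) ≥ 1 − α`.  (Membership of `y` in `C x r̂` is expressed,
via monotonicity of the family, as `y ∈ C x t` for every nonnegative real `t ≥ r̂`.) -/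
theorem split_conformal_marginal_validity_dual {Ω : Type*} [MeasurableSpace Ω]
    (P : Measure Ω) [IsProbabilityMeasure P] (d n : ℕ)
    (X : Fin (n + 1) → Ω → (Fin d → ℝ)) (Y : Fin (n + 1) → Ω → ℝ)
    (hX : ∀ i, Measurable (X i)) (hY : ∀ i, Measurable (Y i))
    (hexch : ∀ π : Equiv.Perm (Fin (n + 1)),
      Measure.map (fun ω => fun i => (X (π i) ω, Y (π i) ω)) P =
        Measure.map (fun ω => fun i => (X i ω, Y i ω)) P)
    (C : (Fin d → ℝ) → ℝ≥0 → Set ℝ)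
    (hmono : ∀ x, ∀ r t : ℝ≥0, r ≤ t → C x r ⊆ C x t)
    (hrc : ∀ x, ∀ r : ℝ≥0, C x r = ⋂ (t : ℝ≥0) (_ : r < t), C x t)
    (hs : Measurable fun p : (Fin d → ℝ) × ℝ => gaugeFn (C p.1) p.2)
    (α : ℝ) (hα0 : 0 < α) (hα1 : α < 1)
    (hceil : ⌈(1 - α) * ((n : ℝ) + 1)⌉₊ ≤ n) :
    ENNReal.ofReal (1 - α) ≤
      P {ω | ∀ t : ℝ≥0,
        orderStatE (fun i : Fin n => gaugeFn (C (X i.castSucc ω)) (Y i.castSucc ω))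
            ⌈(1 - α) * ((n : ℝ) + 1)⌉₊ ≤ (t : ℝ≥0∞) →
          Y (Fin.last n) ω ∈ C (X (Fin.last n) ω) t} := by
  classical
  set k := ⌈(1 - α) * ((n : ℝ) + 1)⌉₊ with hk
  have hpos : (0:ℝ) < (1 - α) * ((n : ℝ) + 1) := mul_pos (by linarith) (by positivity)
  have hk1 : 1 ≤ k := Nat.one_le_iff_ne_zero.mpr (by
    have := Nat.ceil_pos.mpr hpos
    omega)
  -- the canonical vector map
  set V := (Fin (n + 1) → (Fin d → ℝ) × ℝ) with hV
  set T : Ω → V := fun ω i => (X i ω, Y i ω) with hTdef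
  have hT : Measurable T := measurable_pi_lambda _ fun i => (hX i).prodMk (hY i)
  set μ : Measure V := P.map T with hμ
  have hμprob : IsProbabilityMeasure μ := Measure.isProbabilityMeasure_map hT.aemeasurable
  set Rv : Fin (n + 1) → V → ℝ≥0∞ :=
    fun i v => gaugeFn (C (v i).1) (v i).2 with hRvdef
  have hRv : ∀ i, Measurable (Rv i) := fun i => hs.comp (measurable_pi_apply i)
  set cnt : Fin (n + 1) → V → ℕ :=
    fun i v => (Finset.univ.filter fun j => Rv j v < Rv i v).card with hcntdef
  have hcnt : ∀ i, Measurable (cnt i) := by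
    intro i
    have : cnt i = fun v => ∑ j : Fin (n+1), if Rv j v < Rv i v then 1 else 0 := by
      funext v; rw [hcntdef]; exact Finset.card_filter _ _
    rw [this]
    exact Finset.measurable_sum _ fun j _ =>
      Measurable.ite (measurableSet_lt (hRv j) (hRv i)) measurable_const measurable_const
  set B : Fin (n + 1) → Set V := fun i => {v | cnt i v < k} with hBdef
  have hB : ∀ i, MeasurableSet (B i) := fun i =>
    (hcnt i) (MeasurableSet.of_discrete (s := {c : ℕ | c < k}))
  -- exchangeability ⇒ equal probabilities
  have heq : ∀ i, μ (B i) = μ (B (Fin.last n)) := by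
    intro i
    set π : Equiv.Perm (Fin (n + 1)) := Equiv.swap (Fin.last n) i with hπ
    set g : V → V := fun v j => v (π j) with hg
    have hgm : Measurable g := measurable_pi_lambda _ fun j => measurable_pi_apply (π j)
    have hmap : Measure.map g μ = μ := by
      rw [hμ, Measure.map_map hgm hT]
      exact hexch π
    have hpre : g ⁻¹' B (Fin.last n) = B i := by
      ext v
      have hRvg : ∀ j, Rv j (g v) = Rv (π j) v := fun j => rfl
      have hπlast : π (Fin.last n) = i := Equiv.swap_apply_left _ _
      have hcard : cnt (Fin.last n) (g v) = cnt i v := by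
        rw [hcntdef]
        simp only [hRvg, hπlast]
        have himg : Finset.image π (Finset.univ.filter fun j => Rv (π j) v < Rv i v)
            = Finset.univ.filter fun j => Rv j v < Rv i v := by
          ext j'
          simp only [Finset.mem_image, Finset.mem_filter, Finset.mem_univ, true_and]
          constructor
          · rintro ⟨j, hj, rfl⟩; exact hj
          · intro hq; exact ⟨π.symm j', by simpa using hq, by simp⟩
        rw [← himg, Finset.card_image_of_injective _ π.injective]
      simp only [hBdef, Set.mem_preimage, Set.mem_setOf_eq, hcard]
    calc μ (B i) = μ (g ⁻¹' B (Fin.last n)) := by rw [hpre]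
    _ = (Measure.map g μ) (B (Fin.last n)) := (Measure.map_apply hgm (hB _)).symm
    _ = μ (B (Fin.last n)) := by rw [hmap]
  -- sum of probabilities is at least k
  have hsum : (k : ℝ≥0∞) ≤ ∑ i : Fin (n + 1), μ (B i) := by
    have h1 : ∀ i : Fin (n+1), μ (B i) = ∫⁻ v, (B i).indicator 1 v ∂μ := by
      intro i
      rw [lintegral_indicator_one (hB i)]
    have h2 : ∑ i : Fin (n+1), μ (B i)
        = ∫⁻ v, ∑ i : Fin (n+1), (B i).indicator 1 v ∂μ := by
      simp_rw [h1]
      exact (lintegral_finset_sum _ fun i _ => measurable_one.indicator (hB i)).symm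
    rw [h2]
    have hpt : ∀ v : V, (k : ℝ≥0∞) ≤ ∑ i : Fin (n+1), (B i).indicator 1 v := by
      intro v
      have hcard := rank_count_lemma (fun i => Rv i v) k (by omega)
      have : ∑ i : Fin (n+1), (B i).indicator (1 : V → ℝ≥0∞) v
          = ((Finset.univ.filter fun i => v ∈ B i).card : ℝ≥0∞) := by
        rw [Finset.card_filter]
        push_cast
        refine Finset.sum_congr rfl fun i _ => ?_
        by_cases hvb : v ∈ B i <;> simp [Set.indicator_apply, hvb]
      rw [this]
      have : (Finset.univ.filter fun i => v ∈ B i)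
          = (Finset.univ.filter fun i =>
              (Finset.univ.filter fun j => Rv j v < Rv i v).card < k) := by
        simp [hBdef, hcntdef]
      rw [this]
      exact_mod_cast hcard
    calc (k : ℝ≥0∞) = ∫⁻ _, (k : ℝ≥0∞) ∂μ := by simp
    _ ≤ ∫⁻ v, ∑ i : Fin (n+1), (B i).indicator 1 v ∂μ := lintegral_mono hpt
  have hsum' : (k : ℝ≥0∞) ≤ (n + 1) * μ (B (Fin.last n)) := by
    calc (k : ℝ≥0∞) ≤ ∑ i : Fin (n + 1), μ (B i) := hsum
    _ = ∑ _i : Fin (n + 1), μ (B (Fin.last n)) := by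
        exact Finset.sum_congr rfl fun i _ => heq i
    _ = (n + 1) * μ (B (Fin.last n)) := by
        rw [Finset.sum_const, Finset.card_univ, Fintype.card_fin, nsmul_eq_mul]
        push_cast; ring
  -- lower bound for μ (B last)
  have hmulB : ENNReal.ofReal (1 - α) ≤ μ (B (Fin.last n)) := by
    have hc : ((n : ℝ≥0∞) + 1) ≠ 0 := by simp
    have hc' : ((n : ℝ≥0∞) + 1) ≠ ⊤ := by
      simp [ENNReal.add_eq_top]
    rw [← ENNReal.mul_le_mul_iff_left hc hc']
    calc ENNReal.ofReal (1 - α) * ((n : ℝ≥0∞) + 1)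
        = ENNReal.ofReal ((1 - α) * ((n : ℝ) + 1)) := by
          rw [ENNReal.ofReal_mul (by linarith)]
          congr 1
          rw [ENNReal.ofReal_add (by positivity) zero_le_one]
          simp [ENNReal.ofReal_natCast]
    _ ≤ (k : ℝ≥0∞) := by
          rw [← ENNReal.ofReal_natCast k]
          exact ENNReal.ofReal_le_ofReal (Nat.le_ceil _)
    _ ≤ (n + 1) * μ (B (Fin.last n)) := hsum'
    _ = μ (B (Fin.last n)) * ((n : ℝ≥0∞) + 1) := by ring
  -- inclusion of events
  have hincl : T ⁻¹' (B (Fin.last n)) ⊆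
      {ω | ∀ t : ℝ≥0,
        orderStatE (fun i : Fin n => gaugeFn (C (X i.castSucc ω)) (Y i.castSucc ω)) k
          ≤ (t : ℝ≥0∞) →
        Y (Fin.last n) ω ∈ C (X (Fin.last n) ω) t} := by
    intro ω hω
    simp only [Set.mem_preimage, hBdef, Set.mem_setOf_eq] at hω
    set a : ℝ≥0∞ := gaugeFn (C (X (Fin.last n) ω)) (Y (Fin.last n) ω) with ha
    set w : Fin n → ℝ≥0∞ :=
      fun i => gaugeFn (C (X i.castSucc ω)) (Y i.castSucc ω) with hw
    have hwcard : (Finset.univ.filter fun j : Fin n => w j < a).card < k := by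
      refine lt_of_le_of_lt ?_ hω
      rw [hcntdef]
      have himg : Finset.image Fin.castSucc (Finset.univ.filter fun j : Fin n => w j < a)
          ⊆ Finset.univ.filter fun j => Rv j (T ω) < Rv (Fin.last n) (T ω) := by
        intro j' hj'
        simp only [Finset.mem_image, Finset.mem_filter, Finset.mem_univ, true_and] at hj' ⊢
        obtain ⟨j, hj, rfl⟩ := hj'
        exact hj
      calc (Finset.univ.filter fun j : Fin n => w j < a).card
          = (Finset.image Fin.castSucc
              (Finset.univ.filter fun j : Fin n => w j < a)).card :=
            (Finset.card_image_of_injective _ (Fin.castSucc_injective n)).symm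
      _ ≤ _ := Finset.card_le_card himg
    have hord : a ≤ orderStatE w k := le_orderStatE w hk1 hceil hwcard
    intro t ht
    exact mem_of_gauge_le (hmono _) (hrc _) (le_trans hord ht)
  -- conclude
  calc ENNReal.ofReal (1 - α) ≤ μ (B (Fin.last n)) := hmulB
  _ = P (T ⁻¹' B (Fin.last n)) := Measure.map_apply hT (hB _)
  _ ≤ _ := measure_mono hincl
end
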